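/- arXiv:math/0307281 — 3 statements merged into one kernel-verified Lean document; each statement's English description precedes it below -/
import Mathlib

section
/- Let R = k[x,y] and V ⊆ R_j. For every integer s ≥ −j, τ(R_sV) ≤ τ(V), with equality if and only if the ancestor ideals coincide: \overline{R_sV} = V̄. In particular the sequence τ(R_{-j}V), ..., τ(R_{-1}V), τ(V), τ(R_1V), ... is non-decreasing up to index 0 and non-increasing from index 0 on. -/
open MvPolynomial Submodule

variable {k : Type*} [Field k]

noncomputable abbrev Rh (k : Type*) [Field k] (i : ℕ) :
    Submodule k (MvPolynomial (Fin 2) k) :=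
  MvPolynomial.homogeneousSubmodule (Fin 2) k i

noncomputable def mulV (i : ℕ) (V : Submodule k (MvPolynomial (Fin 2) k)) :
    Submodule k (MvPolynomial (Fin 2) k) :=
  Submodule.span k {p | ∃ h ∈ Rh k i, ∃ f ∈ V, p = h * f}

noncomputable def divV (i j : ℕ) (V : Submodule k (MvPolynomial (Fin 2) k)) :
    Submodule k (MvPolynomial (Fin 2) k) :=
  Rh k (j - i) ⊓ ⨅ g ∈ Rh k i, Submodule.comap (LinearMap.mulLeft k g) V

/-- `R_s V` for `s : ℤ` and `V ⊆ R_j`. -/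
noncomputable def opV (j : ℕ) (s : ℤ) (V : Submodule k (MvPolynomial (Fin 2) k)) :
    Submodule k (MvPolynomial (Fin 2) k) :=
  if 0 ≤ s then mulV s.toNat V else divV (-s).toNat j V

/-- `τ(V) = dim R_1 V − dim V`. -/
noncomputable def tauZ (V : Submodule k (MvPolynomial (Fin 2) k)) : ℤ :=
  (Module.finrank k (mulV 1 V) : ℤ) - (Module.finrank k V : ℤ)

/-- The ancestor ideal of `V ⊆ R_j`. -/
noncomputable def anc (j : ℕ) (V : Submodule k (MvPolynomial (Fin 2) k)) :
    Ideal (MvPolynomial (Fin 2) k) :=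
  Ideal.span (⋃ a ∈ Finset.range (j + 1), (divV a j V : Set (MvPolynomial (Fin 2) k)))

/-! In two variables `R₁W = xW + yW` and `xW ∩ yW = xy · R₋₁W`, so
`dim R₁W + dim R₋₁W = 2 dim W`, i.e. `τ(W) = dim W - dim R₋₁W`. As `W ⊆ R₋₁R₁W` and
`R₁R₋₁W ⊆ W`, a single step up or down can only lower `τ`, with equality exactly when that
inclusion is an equality. This happens exactly when the step leaves the ancestor ideal
unchanged, because the homogeneous elements of degree `n ≥ m` in the ancestor ideal of
`W ⊆ R_m` are those of `R_{n-m}W`. Iterating along the monotone chain of ancestor ideals gives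
the claim for every `s`. -/

section Graded

variable {σ R : Type*}

section CommSemiring

variable [CommSemiring R]

theorem homogeneousSubmodule_mul_homogeneousSubmodule (a b : ℕ) :
    homogeneousSubmodule σ R a * homogeneousSubmodule σ R b =
      homogeneousSubmodule σ R (a + b) := by
  rw [← homogeneousSubmodule_one_pow R a, ← homogeneousSubmodule_one_pow R b,
    ← homogeneousSubmodule_one_pow R (a + b), pow_add]

attribute [local instance] MvPolynomial.gradedAlgebra in
theorem homogeneousComponent_mul_of_mem {e : ℕ} {g : MvPolynomial σ R}
    (hg : g ∈ homogeneousSubmodule σ R e) (n : ℕ) (q : MvPolynomial σ R) :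
    homogeneousComponent n (g * q) =
      if e ≤ n then g * homogeneousComponent (n - e) q else 0 := by
  simp only [← decomposition.decompose'_apply]
  exact DirectSum.coe_decompose_mul_of_left_mem _ n hg

theorem mem_of_mem_span_of_mem_homogeneousSubmodule {S : Set (MvPolynomial σ R)}
    {T : Submodule R (MvPolynomial σ R)} {n : ℕ}
    (hS : ∀ g ∈ S, ∃ e ≤ n, g ∈ homogeneousSubmodule σ R e ∧
      ∀ h ∈ homogeneousSubmodule σ R (n - e), h * g ∈ T)
    {p : MvPolynomial σ R} (hp : p ∈ homogeneousSubmodule σ R n) (hpS : p ∈ Ideal.span S) :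
    p ∈ T := by
  suffices ∀ r, homogeneousComponent n (r * p) ∈ T by
    simpa [homogeneousComponent_of_mem hp] using this 1
  clear hp
  induction hpS using Submodule.span_induction with
  | mem g hg =>
    intro r
    obtain ⟨e, hen, hge, hT⟩ := hS g hg
    rw [mul_comm, homogeneousComponent_mul_of_mem hge, if_pos hen, mul_comm]
    exact hT _ (homogeneousComponent_mem _ _)
  | zero => simp
  | add x y _ _ hx hy =>
    intro r
    rw [mul_add, map_add]
    exact add_mem (hx r) (hy r)
  | smul a x _ hx =>
    intro r
    rw [smul_eq_mul, ← mul_assoc]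
    exact hx _

end CommSemiring

theorem mem_homogeneousSubmodule_of_mul_mem [CommRing R] [IsDomain R] {e n : ℕ}
    {g w : MvPolynomial σ R} (hg : g ∈ homogeneousSubmodule σ R e) (hg0 : g ≠ 0)
    (h : g * w ∈ homogeneousSubmodule σ R n) : w ∈ homogeneousSubmodule σ R (n - e) := by
  have hcomp := homogeneousComponent_mul_of_mem hg n w
  rw [homogeneousComponent_of_mem h, if_pos rfl] at hcomp
  split_ifs at hcomp
  · rw [mul_left_cancel₀ hg0 hcomp]
    exact homogeneousComponent_mem _ _
  · rw [(mul_eq_zero.1 hcomp).resolve_left hg0]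
    exact zero_mem _

end Graded

section Chain

variable {α β : Type*} [PartialOrder α] [PartialOrder β] {f : ℕ → α} {g : ℕ → β} {N : ℕ}

theorem antitoneOn_Iic_of_succ_le (hf : ∀ n < N, f (n + 1) ≤ f n) :
    AntitoneOn f (Set.Iic N) :=
  antitoneOn_of_succ_le Set.ordConnected_Iic fun n _ _ hn =>
    hf n (Order.succ_le_iff.1 hn)

theorem apply_eq_apply_zero_iff_of_succ (hf : ∀ n < N, f (n + 1) ≤ f n)
    (hg : ∀ n < N, g n ≤ g (n + 1)) (hfg : ∀ n < N, (f (n + 1) = f n ↔ g (n + 1) = g n))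
    {n : ℕ} (hn : n ≤ N) : f n = f 0 ↔ g n = g 0 := by
  induction n with
  | zero => simp
  | succ n ih =>
    have hnN : n ≤ N := Nat.le_of_succ_le hn
    have hfn : f n ≤ f 0 := antitoneOn_Iic_of_succ_le hf N.zero_le hnN n.zero_le
    have hgn : g 0 ≤ g n := antitoneOn_Iic_of_succ_le (α := βᵒᵈ) hg N.zero_le hnN n.zero_le
    constructor
    · intro h
      have hf0 : f n = f 0 := le_antisymm hfn (h ▸ hf n hn)
      rw [(hfg n hn).1 (h.trans hf0.symm)]
      exact (ih (by omega)).1 hf0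
    · intro h
      have hg0 : g n = g 0 := le_antisymm (h ▸ hg n hn) hgn
      rw [(hfg n hn).2 (h.trans hg0.symm)]
      exact (ih (by omega)).2 hg0

end Chain

instance (n : ℕ) : FiniteDimensional k (Rh k n) :=
  (Submodule.fg_iff_finiteDimensional _).1 (homogeneousSubmodule_fg _ _ n)

theorem mul_mem_Rh {a b n : ℕ} {g f : MvPolynomial (Fin 2) k} (hg : g ∈ Rh k a)
    (hf : f ∈ Rh k b) (h : a + b = n) : g * f ∈ Rh k n :=
  h ▸ IsHomogeneous.mul hg hf

theorem Rh_one : Rh k 1 = span k {X 0, X 1} := by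
  rw [Rh, homogeneousSubmodule_one_eq_span_X]
  congr 1
  ext
  simp [Fin.exists_fin_two, eq_comm]

theorem mul_mem_of_forall_mul_mul_mem {a b : ℕ} {f : MvPolynomial (Fin 2) k}
    {W : Submodule k (MvPolynomial (Fin 2) k)}
    (h : ∀ g ∈ Rh k a, ∀ g' ∈ Rh k b, g * g' * f ∈ W) :
    ∀ g ∈ Rh k (a + b), g * f ∈ W := by
  have hle : Rh k a * Rh k b ≤ W.comap (LinearMap.mulRight k f) := Submodule.mul_le.2 h
  rwa [Rh, Rh, homogeneousSubmodule_mul_homogeneousSubmodule] at hle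

section Operators

variable {V W : Submodule k (MvPolynomial (Fin 2) k)}

theorem mulV_eq_mul (i : ℕ) (V : Submodule k (MvPolynomial (Fin 2) k)) :
    mulV i V = Rh k i * V := by
  rw [mulV, Submodule.mul_eq_span_mul_set]
  congr 1
  ext
  simp [Set.mem_mul, eq_comm]

theorem mulV_zero (V : Submodule k (MvPolynomial (Fin 2) k)) : mulV 0 V = V := by
  rw [mulV_eq_mul, Rh, homogeneousSubmodule_zero, one_mul]

theorem mulV_mulV (a b : ℕ) (V : Submodule k (MvPolynomial (Fin 2) k)) :
    mulV a (mulV b V) = mulV (a + b) V := by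
  rw [mulV_eq_mul, mulV_eq_mul, mulV_eq_mul, ← mul_assoc, Rh,
    homogeneousSubmodule_mul_homogeneousSubmodule]

theorem mulV_succ (n : ℕ) (V : Submodule k (MvPolynomial (Fin 2) k)) :
    mulV (n + 1) V = mulV 1 (mulV n V) := by
  rw [mulV_mulV, add_comm]

theorem mulV_le_Rh {j : ℕ} (hV : V ≤ Rh k j) (i : ℕ) : mulV i V ≤ Rh k (j + i) := by
  rw [mulV_eq_mul, add_comm]
  unfold Rh
  rw [← homogeneousSubmodule_mul_homogeneousSubmodule]
  exact mul_le_mul_right hV _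

theorem mem_divV {a m : ℕ} {f : MvPolynomial (Fin 2) k} :
    f ∈ divV a m W ↔ f ∈ Rh k (m - a) ∧ ∀ g ∈ Rh k a, g * f ∈ W := by
  simp [divV, Submodule.mem_iInf]

theorem divV_le_Rh (a m : ℕ) (W : Submodule k (MvPolynomial (Fin 2) k)) :
    divV a m W ≤ Rh k (m - a) :=
  inf_le_left

theorem mulV_divV_le (a m : ℕ) (W : Submodule k (MvPolynomial (Fin 2) k)) :
    mulV a (divV a m W) ≤ W :=
  span_le.2 <| by
    rintro _ ⟨g, hg, f, hf, rfl⟩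
    exact (mem_divV.1 hf).2 g hg

theorem divV_le_divV_succ_mulV_one (a m : ℕ) (W : Submodule k (MvPolynomial (Fin 2) k)) :
    divV a m W ≤ divV (a + 1) (m + 1) (mulV 1 W) := by
  intro f hf
  rw [mem_divV] at hf ⊢
  refine ⟨by simpa using hf.1, ?_⟩
  rw [add_comm]
  refine mul_mem_of_forall_mul_mul_mem fun g hg g' hg' => ?_
  rw [mul_assoc]
  exact subset_span ⟨g, hg, g' * f, hf.2 g' hg', rfl⟩

theorem divV_zero {m : ℕ} (hW : W ≤ Rh k m) : divV 0 m W = W := by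
  refine le_antisymm ?_ fun f hf => ?_
  · simpa [mulV_zero] using mulV_divV_le 0 m W
  · refine mem_divV.2 ⟨by simpa using hW hf, fun g hg => ?_⟩
    exact mulV_zero W ▸ subset_span ⟨g, hg, f, hf, rfl⟩

theorem divV_add {a b m : ℕ} (h : a + b ≤ m) (W : Submodule k (MvPolynomial (Fin 2) k)) :
    divV (a + b) m W = divV a (m - b) (divV b m W) := by
  ext f
  simp only [mem_divV]
  rw [show m - b - a = m - (a + b) by omega]
  refine and_congr_right fun hf => ⟨fun hW g hg => ⟨mul_mem_Rh hg hf (by omega), ?_⟩, ?_⟩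
  · intro g' hg'
    rw [← mul_assoc]
    exact hW _ (mul_mem_Rh hg' hg (by omega))
  · intro hW
    rw [add_comm]
    exact mul_mem_of_forall_mul_mul_mem fun g' hg' g hg => mul_assoc g' g f ▸ (hW g hg).2 g' hg'

theorem divV_succ {b j : ℕ} (hb : b + 1 ≤ j) (V : Submodule k (MvPolynomial (Fin 2) k)) :
    divV (b + 1) j V = divV 1 (j - b) (divV b j V) := by
  rw [add_comm, divV_add (by omega)]

theorem mem_divV_one {m : ℕ} {f : MvPolynomial (Fin 2) k} :
    f ∈ divV 1 m W ↔ f ∈ Rh k (m - 1) ∧ X 0 * f ∈ W ∧ X 1 * f ∈ W := by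
  rw [mem_divV]
  refine and_congr_right fun _ => ?_
  change Rh k 1 ≤ W.comap (LinearMap.mulRight k f) ↔ _
  rw [Rh_one, span_le, Set.insert_subset_iff, Set.singleton_subset_iff]
  rfl

theorem mulV_one_eq_sup (W : Submodule k (MvPolynomial (Fin 2) k)) :
    mulV 1 W = W.map (LinearMap.mulLeft k (X 0)) ⊔ W.map (LinearMap.mulLeft k (X 1)) := by
  have hmap (x : MvPolynomial (Fin 2) k) : span k {x} * W = W.map (LinearMap.mulLeft k x) :=
    ext fun _ => by simp [mem_span_singleton_mul]
  rw [mulV_eq_mul, Rh_one, span_insert, Submodule.sup_mul, hmap, hmap]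

theorem map_X_zero_inf_map_X_one {m : ℕ} (hW : W ≤ Rh k m) :
    W.map (LinearMap.mulLeft k (X 0)) ⊓ W.map (LinearMap.mulLeft k (X 1)) =
      (divV 1 m W).map (LinearMap.mulLeft k (X 0 * X 1)) := by
  apply le_antisymm
  · rintro p ⟨⟨u, hu, rfl⟩, ⟨v, hv, hvu⟩⟩
    simp only [LinearMap.mulLeft_apply] at hvu ⊢
    obtain ⟨w, rfl⟩ : (X 1 : MvPolynomial (Fin 2) k) ∣ u :=
      (X_prime.dvd_or_dvd ⟨v, hvu.symm⟩).resolve_left (by simp [X_dvd_X])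
    have hvw : v = X 0 * w := mul_left_cancel₀ (X_ne_zero 1) (by rw [hvu]; ring)
    refine ⟨w, mem_divV_one.2 ⟨?_, hvw ▸ hv, hu⟩, by simp only [LinearMap.mulLeft_apply]; ring⟩
    exact mem_homogeneousSubmodule_of_mul_mem (isHomogeneous_X k 1) (X_ne_zero 1) (hW hu)
  · rintro p ⟨w, hw, rfl⟩
    obtain ⟨-, h0, h1⟩ := mem_divV_one.1 hw
    exact ⟨⟨X 1 * w, h1, by simp only [LinearMap.mulLeft_apply]; ring⟩,
      ⟨X 0 * w, h0, by simp only [LinearMap.mulLeft_apply]; ring⟩⟩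

theorem finrank_mulV_one_add_finrank_divV_one {m : ℕ} (hW : W ≤ Rh k m) :
    Module.finrank k (mulV 1 W) + Module.finrank k (divV 1 m W) = 2 * Module.finrank k W := by
  have := Submodule.finiteDimensional_of_le hW
  have hfin (x : MvPolynomial (Fin 2) k) (hx : x ≠ 0)
      (U : Submodule k (MvPolynomial (Fin 2) k)) :
      Module.finrank k (U.map (LinearMap.mulLeft k x)) = Module.finrank k U :=
    (equivMapOfInjective _ (fun _ _ => mul_left_cancel₀ hx) U).finrank_eq.symm
  have h := Submodule.finrank_sup_add_finrank_inf_eq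
    (W.map (LinearMap.mulLeft k (X 0))) (W.map (LinearMap.mulLeft k (X 1)))
  rw [← mulV_one_eq_sup, map_X_zero_inf_map_X_one hW, hfin _ (X_ne_zero 0), hfin _ (X_ne_zero 1),
    hfin _ (mul_ne_zero (X_ne_zero 0) (X_ne_zero 1))] at h
  omega

theorem tauZ_eq_finrank_sub_finrank_divV_one {m : ℕ} (hW : W ≤ Rh k m) :
    tauZ W = Module.finrank k W - Module.finrank k (divV 1 m W) := by
  have := finrank_mulV_one_add_finrank_divV_one hW
  rw [tauZ]
  omega

theorem le_divV_one_mulV_one {m : ℕ} (hW : W ≤ Rh k m) : W ≤ divV 1 (m + 1) (mulV 1 W) := by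
  simpa [divV_zero hW] using divV_le_divV_succ_mulV_one 0 m W

theorem tauZ_mulV_one_le {m : ℕ} (hW : W ≤ Rh k m) : tauZ (mulV 1 W) ≤ tauZ W := by
  have := Submodule.finiteDimensional_of_le (divV_le_Rh 1 (m + 1) (mulV 1 W))
  have hle := Submodule.finrank_mono (le_divV_one_mulV_one hW)
  rw [tauZ_eq_finrank_sub_finrank_divV_one (mulV_le_Rh hW 1), tauZ]
  omega

theorem tauZ_mulV_one_eq_iff {m : ℕ} (hW : W ≤ Rh k m) :
    tauZ (mulV 1 W) = tauZ W ↔ divV 1 (m + 1) (mulV 1 W) = W := by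
  have := Submodule.finiteDimensional_of_le (divV_le_Rh 1 (m + 1) (mulV 1 W))
  rw [tauZ_eq_finrank_sub_finrank_divV_one (mulV_le_Rh hW 1), tauZ]
  refine ⟨fun h => (eq_of_le_of_finrank_le (le_divV_one_mulV_one hW) (by omega)).symm,
    fun h => by rw [h]⟩

theorem tauZ_divV_one_le {m : ℕ} (hW : W ≤ Rh k m) : tauZ (divV 1 m W) ≤ tauZ W := by
  have := Submodule.finiteDimensional_of_le hW
  have hle := Submodule.finrank_mono (mulV_divV_le 1 m W)
  rw [tauZ_eq_finrank_sub_finrank_divV_one hW, tauZ]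
  omega

theorem tauZ_divV_one_eq_iff {m : ℕ} (hW : W ≤ Rh k m) :
    tauZ (divV 1 m W) = tauZ W ↔ mulV 1 (divV 1 m W) = W := by
  have := Submodule.finiteDimensional_of_le hW
  rw [tauZ_eq_finrank_sub_finrank_divV_one hW, tauZ]
  refine ⟨fun h => eq_of_le_of_finrank_le (mulV_divV_le 1 m W) (by omega), fun h => by rw [h]⟩

theorem mem_anc_of_mem_divV {a m : ℕ} (ha : a ≤ m) {f : MvPolynomial (Fin 2) k}
    (hf : f ∈ divV a m W) : f ∈ anc m W :=
  Ideal.subset_span <| Set.mem_biUnion (Finset.mem_range.2 (Nat.lt_succ_of_le ha)) hf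

theorem anc_le_iff {m : ℕ} {I : Ideal (MvPolynomial (Fin 2) k)} :
    anc m W ≤ I ↔ ∀ a ≤ m, ∀ f ∈ divV a m W, f ∈ I := by
  rw [anc, Ideal.span_le, Set.iUnion₂_subset_iff]
  simp [Set.subset_def]

theorem mulV_le_anc {m : ℕ} (hW : W ≤ Rh k m) (n : ℕ) :
    mulV n W ≤ (anc m W).restrictScalars k :=
  span_le.2 <| by
    rintro _ ⟨g, -, w, hw, rfl⟩
    exact Ideal.mul_mem_left _ g (mem_anc_of_mem_divV m.zero_le ((divV_zero hW).symm ▸ hw))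

theorem mem_mulV_of_mem_anc {m n : ℕ} (hmn : m ≤ n) {p : MvPolynomial (Fin 2) k}
    (hp : p ∈ Rh k n) (hpW : p ∈ anc m W) : p ∈ mulV (n - m) W := by
  refine mem_of_mem_span_of_mem_homogeneousSubmodule (fun g hg => ?_) hp hpW
  obtain ⟨a, ha, hga⟩ := Set.mem_iUnion₂.1 hg
  have ha : a ≤ m := Nat.lt_succ_iff.1 (Finset.mem_range.1 ha)
  refine ⟨m - a, by omega, divV_le_Rh a m W hga, ?_⟩
  rw [show n - (m - a) = n - m + a by omega]
  refine mul_mem_of_forall_mul_mul_mem fun h hh h' hh' => ?_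
  rw [mul_assoc]
  exact subset_span ⟨h, hh, h' * g, (mem_divV.1 hga).2 h' hh', rfl⟩

theorem anc_le_anc_mulV_one (m : ℕ) (W : Submodule k (MvPolynomial (Fin 2) k)) :
    anc m W ≤ anc (m + 1) (mulV 1 W) :=
  anc_le_iff.2 fun a ha _ hf =>
    mem_anc_of_mem_divV (by omega) (divV_le_divV_succ_mulV_one a m W hf)

theorem anc_mulV_one_eq_iff {m : ℕ} (hW : W ≤ Rh k m) :
    anc (m + 1) (mulV 1 W) = anc m W ↔ divV 1 (m + 1) (mulV 1 W) = W := by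
  refine ⟨fun h => le_antisymm (fun f hf => ?_) (le_divV_one_mulV_one hW), fun h => ?_⟩
  · have hfa := h ▸ mem_anc_of_mem_divV (by omega) hf
    simpa [mulV_zero] using mem_mulV_of_mem_anc le_rfl (divV_le_Rh 1 (m + 1) _ hf) hfa
  · refine le_antisymm (anc_le_iff.2 fun a ha f hf => ?_) (anc_le_anc_mulV_one m W)
    rcases a with _ | c
    · exact mulV_le_anc hW 1 ((divV_zero (mulV_le_Rh hW 1)) ▸ hf)
    · rw [divV_add (by omega), h] at hf
      exact mem_anc_of_mem_divV (by omega) hf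

theorem anc_divV_one_le_anc {m : ℕ} (hm : 1 ≤ m) (W : Submodule k (MvPolynomial (Fin 2) k)) :
    anc (m - 1) (divV 1 m W) ≤ anc m W :=
  anc_le_iff.2 fun c hc f hf => by
    rw [← divV_add (by omega)] at hf
    exact mem_anc_of_mem_divV (by omega) hf

theorem anc_divV_one_eq_iff {m : ℕ} (hm : 1 ≤ m) (hW : W ≤ Rh k m) :
    anc (m - 1) (divV 1 m W) = anc m W ↔ mulV 1 (divV 1 m W) = W := by
  refine ⟨fun h => le_antisymm (mulV_divV_le 1 m W) (fun f hf => ?_), fun h => ?_⟩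
  · have hfa := h ▸ mem_anc_of_mem_divV (Nat.zero_le m) ((divV_zero hW).symm ▸ hf)
    simpa [show m - (m - 1) = 1 by omega] using mem_mulV_of_mem_anc (by omega) (hW hf) hfa
  · refine le_antisymm (anc_divV_one_le_anc hm W) (anc_le_iff.2 fun a ha f hf => ?_)
    rcases a with _ | c
    · rw [divV_zero hW, ← h] at hf
      exact mulV_le_anc (divV_le_Rh 1 m W) 1 hf
    · rw [divV_add (by omega)] at hf
      exact mem_anc_of_mem_divV (by omega) hf

theorem tauZ_mulV_one_eq_iff_anc {m : ℕ} (hW : W ≤ Rh k m) :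
    tauZ (mulV 1 W) = tauZ W ↔ anc (m + 1) (mulV 1 W) = anc m W :=
  (tauZ_mulV_one_eq_iff hW).trans (anc_mulV_one_eq_iff hW).symm

theorem tauZ_divV_one_eq_iff_anc {m : ℕ} (hm : 1 ≤ m) (hW : W ≤ Rh k m) :
    tauZ (divV 1 m W) = tauZ W ↔ anc (m - 1) (divV 1 m W) = anc m W :=
  (tauZ_divV_one_eq_iff hW).trans (anc_divV_one_eq_iff hm hW).symm

theorem tauZ_mulV_antitone {j : ℕ} (hV : V ≤ Rh k j) : Antitone fun n => tauZ (mulV n V) :=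
  antitone_nat_of_succ_le fun n => by
    rw [mulV_succ]
    exact tauZ_mulV_one_le (mulV_le_Rh hV n)

theorem tauZ_mulV_eq_iff {j : ℕ} (hV : V ≤ Rh k j) (n : ℕ) :
    tauZ (mulV n V) = tauZ V ↔ anc (j + n) (mulV n V) = anc j V := by
  simpa [mulV_zero] using apply_eq_apply_zero_iff_of_succ
    (f := fun n => tauZ (mulV n V)) (g := fun n => anc (j + n) (mulV n V))
    (fun i _ => tauZ_mulV_antitone hV (Nat.le_succ i))
    (fun i _ => by rw [mulV_succ]; exact anc_le_anc_mulV_one (j + i) (mulV i V))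
    (fun i _ => by rw [mulV_succ]; exact tauZ_mulV_one_eq_iff_anc (mulV_le_Rh hV i))
    le_rfl

theorem tauZ_divV_antitoneOn (j : ℕ) (V : Submodule k (MvPolynomial (Fin 2) k)) :
    AntitoneOn (fun b => tauZ (divV b j V)) (Set.Iic j) :=
  antitoneOn_Iic_of_succ_le fun b hb => by
    simpa only [divV_succ hb V] using tauZ_divV_one_le (divV_le_Rh b j V)

theorem tauZ_divV_eq_iff {j b : ℕ} (hV : V ≤ Rh k j) (hb : b ≤ j) :
    tauZ (divV b j V) = tauZ V ↔ anc (j - b) (divV b j V) = anc j V := by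
  simpa [divV_zero hV] using apply_eq_apply_zero_iff_of_succ
    (f := fun b => tauZ (divV b j V))
    (g := fun b => OrderDual.toDual (anc (j - b) (divV b j V)))
    (fun i hi => tauZ_divV_antitoneOn j V hi.le hi (Nat.le_succ i))
    (fun i hi => by
      simpa only [divV_succ hi V, OrderDual.toDual_le_toDual, Nat.sub_add_eq] using
        anc_divV_one_le_anc (by omega) (divV i j V))
    (fun i hi => by
      simpa only [divV_succ hi V, OrderDual.toDual_inj, Nat.sub_add_eq] using
        tauZ_divV_one_eq_iff_anc (by omega) (divV_le_Rh i j V))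
    hb

theorem opV_of_nonneg {s : ℤ} (hs : 0 ≤ s) (j : ℕ) (V : Submodule k (MvPolynomial (Fin 2) k)) :
    opV j s V = mulV s.toNat V := by
  rw [opV, if_pos hs]

theorem opV_of_nonpos {j : ℕ} (hV : V ≤ Rh k j) {s : ℤ} (hs : s ≤ 0) :
    opV j s V = divV (-s).toNat j V := by
  rcases hs.lt_or_eq with hs | rfl
  · rw [opV, if_neg hs.not_ge]
  · rw [opV_of_nonneg le_rfl, neg_zero, Int.toNat_zero, mulV_zero, divV_zero hV]

end Operators

/-- For `s ≥ −j`, `τ(R_sV) ≤ τ(V)`, with equality iff the ancestor ideals of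
`R_sV` and `V` coincide; moreover `s ↦ τ(R_sV)` is non-decreasing for `s ≤ 0`
and non-increasing for `s ≥ 0`. -/
theorem tau_opV_le_and_monotone (j : ℕ) (V : Submodule k (MvPolynomial (Fin 2) k))
    (hV : V ≤ Rh k j) :
    (∀ s : ℤ, -(j : ℤ) ≤ s →
      (tauZ (opV j s V) ≤ tauZ V ∧
        (tauZ (opV j s V) = tauZ V ↔ anc ((j : ℤ) + s).toNat (opV j s V) = anc j V))) ∧
    (∀ s t : ℤ, -(j : ℤ) ≤ s → s ≤ t → t ≤ 0 → tauZ (opV j s V) ≤ tauZ (opV j t V)) ∧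
    (∀ s t : ℤ, 0 ≤ s → s ≤ t → tauZ (opV j t V) ≤ tauZ (opV j s V)) := by
  refine ⟨fun s hs => ?_, fun s t hs hst ht => ?_, fun s t hs hst => ?_⟩
  · rcases le_total 0 s with h | h
    · rw [opV_of_nonneg h, show ((j : ℤ) + s).toNat = j + s.toNat by omega]
      refine ⟨?_, tauZ_mulV_eq_iff hV _⟩
      simpa [mulV_zero] using tauZ_mulV_antitone hV (Nat.zero_le s.toNat)
    · rw [opV_of_nonpos hV h, show ((j : ℤ) + s).toNat = j - (-s).toNat by omega]
      refine ⟨?_, tauZ_divV_eq_iff hV (by omega)⟩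
      simpa [divV_zero hV] using
        tauZ_divV_antitoneOn j V (Nat.zero_le j) (show (-s).toNat ≤ j by omega) (Nat.zero_le _)
  · rw [opV_of_nonpos hV (hst.trans ht), opV_of_nonpos hV ht]
    exact tauZ_divV_antitoneOn j V (show (-t).toNat ≤ j by omega) (show (-s).toNat ≤ j by omega)
      (by omega)
  · rw [opV_of_nonneg hs, opV_of_nonneg (hs.trans hst)]
    exact tauZ_mulV_antitone hV (by omega)
end

section
/- Let R = k[x,y] and let I be a graded ideal of R. Then I is the ancestor ideal of its degree-j component I_j if and only if I is generated by forms of degree at most j and all relations among a minimal generating set have degrees at least j+2 (equivalently, I has a minimal generating set f_1,...,f_ν of degrees ≤ j with I_{j+1} = ⊕_i R_{j+1−deg f_i}·f_i). -/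
open MvPolynomial Submodule Finset

variable {k : Type*} [Field k]

namespace AncAux

abbrev R (k : Type*) [Field k] := MvPolynomial (Fin 2) k

lemma deg2 (m : Fin 2 →₀ ℕ) : m.degree = m 0 + m 1 := by
  have h2 : m.degree = ∑ i : Fin 2, m i := by
    rw [Finsupp.degree]
    refine Finset.sum_subset (Finset.subset_univ _) ?_
    intro i _ hi
    exact Finsupp.notMem_support_iff.mp hi
  rw [h2, Fin.sum_univ_two]

lemma isHom_iff {φ : R k} {n : ℕ} :
    φ ∈ Rh k n ↔ ∀ d : Fin 2 →₀ ℕ, coeff d φ ≠ 0 → d.degree = n := by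
  rw [mem_homogeneousSubmodule]
  constructor
  · intro h d hd
    have := h hd
    rw [Finsupp.degree_eq_weight_one]
    exact this
  · intro h d hd
    have := h d hd
    rwa [Finsupp.degree_eq_weight_one] at this

lemma Rh0_eq_C {φ : R k} (h : φ ∈ Rh k 0) : φ = C (coeff 0 φ) := by
  have h1 := homogeneousComponent_of_mem h (m := 0)
  rw [if_pos rfl] at h1
  conv_lhs => rw [← h1]
  rw [homogeneousComponent_zero]

lemma X_dvd_iff_coeff {i : Fin 2} {x : R k} :
    X i ∣ x ↔ ∀ m : Fin 2 →₀ ℕ, m i = 0 → coeff m x = 0 := by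
  constructor
  · rintro ⟨y, rfl⟩ m hm
    classical
    rw [coeff_X_mul']
    simp [Finsupp.mem_support_iff, hm]
  · intro h
    rw [MvPolynomial.X_dvd_iff_modMonomial_eq_zero]
    ext m
    by_cases hle : Finsupp.single i 1 ≤ m
    · simp [MvPolynomial.coeff_modMonomial_of_le _ hle]
    · rw [MvPolynomial.coeff_modMonomial_of_not_le _ hle, coeff_zero]
      apply h
      by_contra hmi
      exact hle (Finsupp.single_le_iff.mpr (Nat.one_le_iff_ne_zero.mpr hmi))

lemma Xdvd_of_dvd_mul {i j : Fin 2} (hij : i ≠ j) {P : R k}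
    (h : X i ∣ X j * P) : X i ∣ P := by
  rw [X_dvd_iff_coeff] at h ⊢
  intro m hm
  have := h (Finsupp.single j 1 + m) (by
    simp [Finsupp.add_apply, Finsupp.single_apply, (by simpa using hij.symm : ¬ j = i), hm])
  rwa [coeff_X_mul] at this

lemma hom_of_X_mul {g : R k} {i : Fin 2} {e : ℕ} (h : X i * g ∈ Rh k (e + 1)) :
    g ∈ Rh k e := by
  rw [isHom_iff] at h ⊢
  intro m hm
  have := h (Finsupp.single i 1 + m) (by rwa [coeff_X_mul])
  rw [deg2] at this ⊢
  simp only [Finsupp.add_apply, Finsupp.single_apply] at this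
  fin_cases i <;> simp_all <;> omega

lemma eq_zero_of_X_mul_Rh0 {g : R k} {i : Fin 2} (h : X i * g ∈ Rh k 0) : g = 0 := by
  by_contra hg
  obtain ⟨m, hm⟩ := MvPolynomial.ne_zero_iff.mp hg
  have := (isHom_iff.mp h) (Finsupp.single i 1 + m) (by rwa [coeff_X_mul])
  rw [deg2] at this
  simp only [Finsupp.add_apply, Finsupp.single_apply] at this
  fin_cases i <;> simp_all


lemma Xmul (i : Fin 2) (s : Fin 2 →₀ ℕ) (c : k) :
    X i * monomial s c = monomial (Finsupp.single i 1 + s) c := by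
  rw [show (X i : R k) = monomial (Finsupp.single i 1) 1 by
    rw [← X_pow_eq_monomial, pow_one], monomial_mul, one_mul]

lemma split {t : R k} {e : ℕ} (ht : t ∈ Rh k (e + 1)) :
    ∃ p q : R k, p ∈ Rh k e ∧ q ∈ Rh k e ∧ t = X 0 * p + X 1 * q := by
  classical
  have hts : t ∈ Submodule.map (LinearMap.mulLeft k (X 0 : R k)) (Rh k e) ⊔
      Submodule.map (LinearMap.mulLeft k (X 1 : R k)) (Rh k e) := by
    rw [t.as_sum]
    refine Submodule.sum_mem _ ?_
    intro m hm
    have hdeg : m.degree = e + 1 := (isHom_iff.mp ht) m (MvPolynomial.mem_support_iff.mp hm)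
    rw [deg2] at hdeg
    by_cases h0 : m 0 = 0
    · have h1 : 1 ≤ m 1 := by omega
      refine Submodule.mem_sup_right ⟨monomial (m - Finsupp.single 1 1) (coeff m t), ?_, ?_⟩
      · apply isHomogeneous_monomial
        rw [deg2, Finsupp.tsub_apply, Finsupp.tsub_apply, Finsupp.single_apply,
          Finsupp.single_apply, if_neg (by decide : ¬ ((1:Fin 2) = 0)), if_pos rfl]
        omega
      · simp only [LinearMap.mulLeft_apply]
        rw [Xmul, add_tsub_cancel_of_le (Finsupp.single_le_iff.mpr h1)]
    · refine Submodule.mem_sup_left ⟨monomial (m - Finsupp.single 0 1) (coeff m t), ?_, ?_⟩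
      · apply isHomogeneous_monomial
        rw [deg2, Finsupp.tsub_apply, Finsupp.tsub_apply, Finsupp.single_apply,
          Finsupp.single_apply, if_pos rfl, if_neg (by decide : ¬ ((0:Fin 2) = 1))]
        omega
      · simp only [LinearMap.mulLeft_apply]
        rw [Xmul, add_tsub_cancel_of_le (Finsupp.single_le_iff.mpr (by omega))]
  obtain ⟨p, hp, q, hq, hpq⟩ := Submodule.mem_sup.mp hts
  obtain ⟨p', hp', rfl⟩ := hp
  obtain ⟨q', hq', rfl⟩ := hq
  exact ⟨p', q', hp', hq', hpq.symm⟩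

lemma homComp_mul {g : R k} {dg : ℕ} (hg : g ∈ Rh k dg) (c : R k) (m : ℕ) :
    homogeneousComponent m (c * g) =
      (if dg ≤ m then homogeneousComponent (m - dg) c else 0) * g := by
  classical
  conv_lhs => rw [show c = ∑ i ∈ Finset.range (c.totalDegree + 1), homogeneousComponent i c from
    (sum_homogeneousComponent c).symm]
  rw [Finset.sum_mul, map_sum]
  have hterm : ∀ i, homogeneousComponent m (homogeneousComponent i c * g) =
      if m = i + dg then homogeneousComponent i c * g else 0 := by
    intro i
    exact homogeneousComponent_of_mem ((homogeneousComponent_isHomogeneous i c).mul hg)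
  simp_rw [hterm]
  by_cases hdg : dg ≤ m
  · rw [if_pos hdg]
    have hcond : ∀ i : ℕ, (m = i + dg) = (i = m - dg) := by
      intro i; apply propext; constructor <;> intro h <;> omega
    simp_rw [hcond]
    rw [Finset.sum_ite_eq' (Finset.range (c.totalDegree + 1)) (m - dg)
      (fun i => homogeneousComponent i c * g)]
    by_cases hin : m - dg ∈ Finset.range (c.totalDegree + 1)
    · rw [if_pos hin]
    · rw [if_neg hin, homogeneousComponent_eq_zero, zero_mul]
      simp only [Finset.mem_range] at hin
      omega
  · rw [if_neg hdg, zero_mul]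
    apply Finset.sum_eq_zero
    intro i _
    rw [if_neg (by omega)]

lemma decomp {ν : ℕ} {f : Fin ν → R k} {d : Fin ν → ℕ} (hf : ∀ u, f u ∈ Rh k (d u))
    {h : R k} {m : ℕ} (hsp : h ∈ Ideal.span (Set.range f)) (hhm : h ∈ Rh k m) :
    ∃ t : Fin ν → R k, (∀ u, t u ∈ Rh k (m - d u)) ∧ (∀ u, m < d u → t u = 0) ∧
      h = ∑ u, t u * f u := by
  classical
  obtain ⟨c, hc⟩ := Ideal.mem_span_range_iff_exists_fun.mp hsp
  refine ⟨fun u => if d u ≤ m then homogeneousComponent (m - d u) (c u) else 0, ?_, ?_, ?_⟩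
  · intro u
    by_cases hdu : d u ≤ m
    · simpa only [if_pos hdu] using homogeneousComponent_mem (m - d u) (c u)
    · simpa only [if_neg hdu] using Submodule.zero_mem (Rh k (m - d u))
  · intro u hu
    simp only [if_neg (by omega : ¬ d u ≤ m)]
  · have := congrArg (homogeneousComponent m) hc
    rw [map_sum] at this
    rw [homogeneousComponent_of_mem hhm, if_pos rfl] at this
    rw [← this]
    refine Finset.sum_congr rfl fun u _ => ?_
    exact homComp_mul (hf u) (c u) m


instance RhFD (m : ℕ) : FiniteDimensional k (Rh k m) :=
  Submodule.finiteDimensional_of_le (S₂ := MvPolynomial.restrictTotalDegree (Fin 2) k m)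
    (fun p hp => (MvPolynomial.mem_restrictTotalDegree _ _ _).mpr
      (MvPolynomial.IsHomogeneous.totalDegree_le hp))

lemma finrank_Rh (m : ℕ) : Module.finrank k (Rh k m) = m + 1 := by
  classical
  have hEq : (Rh k m : Submodule k (R k)) =
      MvPolynomial.restrictSupport k {d : Fin 2 →₀ ℕ | Finsupp.degree d = m} := by
    show MvPolynomial.homogeneousSubmodule (Fin 2) k m = _
    rw [MvPolynomial.homogeneousSubmodule_eq_finsupp_supported]
    rfl
  let e : {d : Fin 2 →₀ ℕ // Finsupp.degree d = m} ≃ Fin (m + 1) :=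
    { toFun := fun d => ⟨d.1 0, by have h2 := deg2 d.1; have := d.2; omega⟩
      invFun := fun i => ⟨Finsupp.single 0 (i : ℕ) + Finsupp.single 1 (m - (i : ℕ)), by
        rw [deg2]
        have := i.2
        simp only [Finsupp.add_apply, Finsupp.single_apply]
        norm_num
        omega⟩
      left_inv := by
        rintro ⟨d, hd⟩
        have h2 := deg2 d
        ext a
        fin_cases a <;> simp [Finsupp.single_apply] <;> omega
      right_inv := by
        intro i
        apply Fin.ext
        simp [Finsupp.single_apply] }
  rw [show Rh k m = MvPolynomial.restrictSupport k {d : Fin 2 →₀ ℕ | Finsupp.degree d = m}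
    from hEq]
  have b := (MvPolynomial.basisRestrictSupport k
    {d : Fin 2 →₀ ℕ | Finsupp.degree d = m}).reindex e
  rw [Module.finrank_eq_card_basis b, Fintype.card_fin]

/-- The multiplication map `(t_u) ↦ ∑ t_u f_u`. -/
noncomputable def mu {ν : ℕ} (f : Fin ν → R k) (D : Fin ν → ℕ) :
    (∀ u, Rh k (D u)) →ₗ[k] R k :=
  LinearMap.lsum k (fun u => Rh k (D u)) k
    (fun u => (LinearMap.mulRight k (f u)).comp (Rh k (D u)).subtype)

lemma mu_apply {ν : ℕ} (f : Fin ν → R k) (D : Fin ν → ℕ) (t : ∀ u, Rh k (D u)) :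
    mu f D t = ∑ u, (t u : R k) * f u := by
  simp [mu, LinearMap.lsum_apply]

lemma mu_range {ν : ℕ} {f : Fin ν → R k} {d : Fin ν → ℕ} (hf : ∀ u, f u ∈ Rh k (d u))
    {I : Ideal (R k)} (hspan : I = Ideal.span (Set.range f)) {m : ℕ} (hm : ∀ u, d u ≤ m) :
    LinearMap.range (mu f (fun u => m - d u)) = I.restrictScalars k ⊓ Rh k m := by
  apply le_antisymm
  · rintro _ ⟨t, rfl⟩
    rw [mu_apply]
    constructor
    · refine Ideal.sum_mem _ fun u _ => ?_
      refine Ideal.mul_mem_left _ _ ?_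
      rw [hspan]
      exact Ideal.subset_span (Set.mem_range_self u)
    · refine Submodule.sum_mem _ fun u _ => ?_
      have := (t u).2.mul (hf u)
      rwa [Nat.sub_add_cancel (hm u)] at this
  · rintro h ⟨hI, hRh⟩
    obtain ⟨t, ht, _, rfl⟩ := decomp hf (hspan ▸ hI) hRh
    exact ⟨fun u => ⟨t u, ht u⟩, (mu_apply _ _ _)⟩

lemma mem_divV {a j : ℕ} {V : Submodule k (R k)} {g : R k} :
    g ∈ divV a j V ↔ g ∈ Rh k (j - a) ∧ ∀ h ∈ Rh k a, h * g ∈ V := by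
  simp only [divV, Submodule.mem_inf, Submodule.mem_iInf, Submodule.mem_comap,
    LinearMap.mulLeft_apply]

lemma divV_le_anc {a j : ℕ} (ha : a ≤ j) {V : Submodule k (R k)} {g : R k}
    (hg : g ∈ divV a j V) : g ∈ anc j V :=
  Ideal.subset_span (Set.mem_biUnion (Finset.mem_range.mpr (by omega)) hg)

lemma factor_eq {p q : R k} (h : X 1 * p = X 0 * q) :
    ∃ r : R k, p = X 0 * r ∧ q = X 1 * r := by
  have h0 : (X 0 : R k) ∣ p :=
    Xdvd_of_dvd_mul (by decide : (0 : Fin 2) ≠ 1) ⟨q, h⟩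
  obtain ⟨r, rfl⟩ := h0
  refine ⟨r, rfl, ?_⟩
  have h2 : (X 0 : R k) * (X 1 * r) = X 0 * q := by rw [← h]; ring
  exact (mul_left_cancel₀ (X_ne_zero 0) h2).symm

lemma anc_of_gens {j : ℕ} {I : Ideal (R k)}
    {ν : ℕ} {f : Fin ν → R k} {d : Fin ν → ℕ}
    (hf : ∀ u, f u ∈ Rh k (d u)) (hd : ∀ u, d u ≤ j)
    (hspan : I = Ideal.span (Set.range f))
    (hker : LinearMap.ker (mu f (fun u => j + 1 - d u)) = ⊥) :
    I = anc j (I.restrictScalars k ⊓ Rh k j) := by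
  set V := I.restrictScalars k ⊓ Rh k j with hV
  have hfI : ∀ u, f u ∈ I := fun u => hspan ▸ Ideal.subset_span (Set.mem_range_self u)
  apply le_antisymm
  · -- I ≤ anc
    conv_lhs => rw [hspan]
    rw [Ideal.span_le]
    rintro _ ⟨u, rfl⟩
    refine SetLike.mem_coe.mpr (divV_le_anc (Nat.sub_le j (d u)) (mem_divV.mpr ⟨?_, ?_⟩))
    · rw [Nat.sub_sub_self (hd u)]; exact hf u
    · intro h hh
      refine ⟨Ideal.mul_mem_left _ _ (hfI u), ?_⟩
      have := hh.mul (hf u)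
      rwa [Nat.sub_add_cancel (hd u)] at this
  · -- anc ≤ I
    have key : ∀ a, a ≤ j → ∀ g, g ∈ divV a j V → g ∈ I := by
      intro a
      induction a with
      | zero =>
        intro _ g hg
        have := (mem_divV.mp hg).2 1 (isHomogeneous_one (Fin 2) k)
        rw [one_mul] at this
        exact this.1
      | succ a ih =>
        intro haj g hg
        obtain ⟨h1, h2⟩ := mem_divV.mp hg
        have hXmem : ∀ i : Fin 2, X i * g ∈ I := by
          intro i
          refine ih (by omega) _ (mem_divV.mpr ⟨?_, ?_⟩)
          · have := (isHomogeneous_X k i).mul h1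
            rwa [show 1 + (j - (a+1)) = j - a by omega] at this
          · intro h hh
            have h3 : h * X i * g ∈ V := h2 (h * X i) (by
              have := hh.mul (isHomogeneous_X k i)
              rwa [show a + 1 = a + 1 from rfl] at this)
            rwa [mul_assoc] at h3
        have hX0 : X 0 * g ∈ Rh k ((j - (a+1)) + 1) := by
          have := (isHomogeneous_X k 0).mul h1
          rwa [Nat.add_comm] at this
        have hX1 : X 1 * g ∈ Rh k ((j - (a+1)) + 1) := by
          have := (isHomogeneous_X k 1).mul h1
          rwa [Nat.add_comm] at this
        obtain ⟨p, hp, hp0, hpe⟩ := decomp hf (hspan ▸ hXmem 0) hX0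
        obtain ⟨q, hq, hq0, hqe⟩ := decomp hf (hspan ▸ hXmem 1) hX1
        have htmem : ∀ u, (X 0:R k)^a * (X 1 * p u - X 0 * q u) ∈ Rh k (j + 1 - d u) := by
          intro u
          by_cases hdu : d u ≤ (j - (a+1)) + 1
          · have hpu : (X 1:R k) * p u ∈ Rh k (1 + ((j - (a+1)) + 1 - d u)) :=
              (isHomogeneous_X k 1).mul (hp u)
            have hqu : (X 0:R k) * q u ∈ Rh k (1 + ((j - (a+1)) + 1 - d u)) :=
              (isHomogeneous_X k 0).mul (hq u)
            have := (isHomogeneous_X_pow 0 a (R := k)).mul (Submodule.sub_mem _ hpu hqu)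
            rwa [show a + (1 + ((j - (a+1)) + 1 - d u)) = j + 1 - d u by omega] at this
          · rw [hp0 u (by omega), hq0 u (by omega)]
            rw [mul_zero, mul_zero, sub_zero, mul_zero]
            exact Submodule.zero_mem _
        have hmu : mu f (fun u => j + 1 - d u) (fun u => ⟨_, htmem u⟩) = 0 := by
          rw [mu_apply]
          have hterm : ∀ u : Fin ν, (X 0:R k)^a * (X 1 * p u - X 0 * q u) * f u
              = ((X 0:R k)^a * X 1) * (p u * f u) - ((X 0:R k)^a * X 0) * (q u * f u) := by
            intro u; ring
          calc ∑ u, ((X 0:R k)^a * (X 1 * p u - X 0 * q u) : R k) * f u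
              = ∑ u, (((X 0:R k)^a * X 1) * (p u * f u) - ((X 0:R k)^a * X 0) * (q u * f u)) :=
                Finset.sum_congr rfl (fun u _ => hterm u)
            _ = ((X 0:R k)^a * X 1) * (∑ u, p u * f u) - ((X 0:R k)^a * X 0) * (∑ u, q u * f u) := by
                rw [Finset.sum_sub_distrib, Finset.mul_sum, Finset.mul_sum]
            _ = 0 := by rw [← hpe, ← hqe]; ring
        have ht0 : ∀ u : Fin ν, (X 0:R k)^a * (X 1 * p u - X 0 * q u) = 0 := by
          have hz : (fun u => (⟨_, htmem u⟩ : Rh k (j + 1 - d u))) = 0 := by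
            have hk : (fun u => (⟨_, htmem u⟩ : Rh k (j + 1 - d u))) ∈
                LinearMap.ker (mu f (fun u => j + 1 - d u)) := LinearMap.mem_ker.mpr hmu
            rw [hker] at hk
            exact hk
          intro u
          exact Subtype.ext_iff.mp (congrFun hz u)
        have hfac : ∀ u, (X 1:R k) * p u = X 0 * q u := by
          intro u
          rcases mul_eq_zero.mp (ht0 u) with h' | h'
          · exact absurd h' (pow_ne_zero _ (X_ne_zero 0))
          · exact sub_eq_zero.mp h'
        choose r hr1 hr2 using fun u => factor_eq (hfac u)
        have hgeq : X 0 * g = X 0 * ∑ u, r u * f u := by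
          rw [hpe, Finset.mul_sum]
          refine Finset.sum_congr rfl fun u _ => ?_
          rw [hr1 u]; ring
        rw [mul_left_cancel₀ (X_ne_zero 0) hgeq]
        exact Ideal.sum_mem _ fun u _ => Ideal.mul_mem_left _ _ (hfI u)
    rw [anc, Ideal.span_le]
    intro x hx
    simp only [Set.mem_iUnion, SetLike.mem_coe] at hx
    obtain ⟨a, ha, hxa⟩ := hx
    exact key a (by simpa [Finset.mem_range] using Nat.lt_succ_iff.mp (Finset.mem_range.mp ha)) x hxa

lemma rank_iff {j : ℕ} {I : Ideal (R k)} {ν : ℕ} {f : Fin ν → R k} {d : Fin ν → ℕ}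
    (hf : ∀ u, f u ∈ Rh k (d u)) (hd : ∀ u, d u ≤ j)
    (hspan : I = Ideal.span (Set.range f)) :
    (Module.finrank k (I.restrictScalars k ⊓ Rh k (j+1) : Submodule k (R k))
        = ∑ u, (j + 2 - d u))
      ↔ LinearMap.ker (mu f (fun u => j + 1 - d u)) = ⊥ := by
  have hrange := mu_range hf hspan (m := j + 1) (fun u => (by have := hd u; omega))
  have hdom : Module.finrank k (∀ u, Rh k (j + 1 - d u)) = ∑ u, (j + 2 - d u) := by
    rw [Module.finrank_pi_fintype]
    exact Finset.sum_congr rfl fun u _ => by rw [finrank_Rh]; have := hd u; omega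
  have hrn := LinearMap.finrank_range_add_finrank_ker (mu f (fun u => j + 1 - d u))
  rw [hrange, hdom] at hrn
  constructor
  · intro h
    rw [h] at hrn
    have h0 : Module.finrank k (LinearMap.ker (mu f fun u => j + 1 - d u)) = 0 := by omega
    exact Submodule.finrank_eq_zero.mp h0
  · intro h
    rw [h, finrank_bot] at hrn
    omega

lemma caseA {j n : ℕ} {I : Ideal (R k)} (f : Fin (n+1) → R k) (d : Fin (n+1) → ℕ)
    (hf : ∀ u, f u ∈ Rh k (d u)) (hd : ∀ u, d u ≤ j) (hspan : I = Ideal.span (Set.range f))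
    (u : Fin (n+1)) (t : Fin (n+1) → R k) (hts : ∑ v, t v * f v = 0)
    (htu0 : t u ∈ Rh k 0) (htu : t u ≠ 0) :
    ∃ f' : Fin n → R k, ∃ d' : Fin n → ℕ, (∀ i, f' i ∈ Rh k (d' i)) ∧ (∀ i, d' i ≤ j) ∧
      I = Ideal.span (Set.range f') := by
  set c := coeff 0 (t u) with hc
  have htuC : t u = C c := Rh0_eq_C htu0
  have hcne : c ≠ 0 := fun h0 => htu (by rw [htuC, h0, map_zero])
  have hsum := Fin.sum_univ_succAbove (fun v => t v * f v) u
  rw [hts] at hsum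
  have hfu : C c * f u = -∑ i : Fin n, t (u.succAbove i) * f (u.succAbove i) := by
    rw [← htuC]
    linear_combination -hsum
  have hfu2 : f u ∈ Ideal.span (Set.range (fun i : Fin n => f (u.succAbove i))) := by
    have hre : f u = C c⁻¹ * (C c * f u) := by
      rw [← mul_assoc, ← C_mul, inv_mul_cancel₀ hcne, C_1, one_mul]
    rw [hre, hfu]
    refine Ideal.mul_mem_left _ _ (Submodule.neg_mem _ (Ideal.sum_mem _ fun i _ =>
      Ideal.mul_mem_left _ _ (Ideal.subset_span ⟨i, rfl⟩)))
  refine ⟨fun i => f (u.succAbove i), fun i => d (u.succAbove i),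
    fun i => hf _, fun i => hd _, ?_⟩
  apply le_antisymm
  · conv_lhs => rw [hspan]
    rw [Ideal.span_le]
    rintro _ ⟨v, rfl⟩
    by_cases hvu : v = u
    · subst hvu; exact hfu2
    · obtain ⟨i, rfl⟩ := Fin.exists_succAbove_eq hvu
      exact Ideal.subset_span ⟨i, rfl⟩
  · rw [Ideal.span_le]
    rintro _ ⟨i, rfl⟩
    rw [hspan]
    exact Ideal.subset_span ⟨u.succAbove i, rfl⟩

lemma gens_of_anc (j : ℕ) (I : Ideal (R k))
    (hanc : I = anc j (I.restrictScalars k ⊓ Rh k j)) :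
    ∃ (ν : ℕ) (f : Fin ν → R k) (d : Fin ν → ℕ),
      (∀ u, f u ∈ Rh k (d u)) ∧ (∀ u, d u ≤ j) ∧ I = Ideal.span (Set.range f) ∧
      LinearMap.ker (mu f (fun u => j + 1 - d u)) = ⊥ := by
  classical
  set V := I.restrictScalars k ⊓ Rh k j with hV
  set P : ℕ → Prop := fun n => ∃ f : Fin n → R k, ∃ d : Fin n → ℕ,
    (∀ u, f u ∈ Rh k (d u)) ∧ (∀ u, d u ≤ j) ∧ I = Ideal.span (Set.range f) with hP
  -- Step 1 : P holds for some n
  have hdivfd : ∀ a : ℕ, FiniteDimensional k (divV a j V) := fun a =>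
    Submodule.finiteDimensional_of_le (S₂ := Rh k (j - a)) inf_le_left
  have hex : ∃ n, P n := by
    have hfg : ∀ a : ℕ, ∃ S : Finset (R k), Submodule.span k (S : Set (R k)) = divV a j V :=
      fun a => by
        have := hdivfd a
        exact Module.Finite.iff_fg.mp (hdivfd a)
    choose Sa hSa using hfg
    set S : Finset (R k) := (Finset.range (j+1)).biUnion Sa with hS
    have hSsub : ∀ x ∈ S, ∃ a ≤ j, x ∈ divV a j V := by
      intro x hx
      obtain ⟨a, ha, hxa⟩ := Finset.mem_biUnion.mp hx
      exact ⟨a, by simpa using Nat.lt_succ_iff.mp (Finset.mem_range.mp ha),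
        hSa a ▸ Submodule.subset_span hxa⟩
    have hspanS : I = Ideal.span (S : Set (R k)) := by
      apply le_antisymm
      · conv_lhs => rw [hanc]
        rw [anc, Ideal.span_le]
        intro x hx
        simp only [Set.mem_iUnion, SetLike.mem_coe] at hx
        obtain ⟨a, ha, hxa⟩ := hx
        have ha' : a ∈ Finset.range (j + 1) := ha
        rw [← hSa a] at hxa
        have hle : Submodule.span k (Sa a : Set (R k)) ≤
            (Ideal.span (S : Set (R k))).restrictScalars k := by
          rw [Submodule.span_le]
          intro y hy
          exact Ideal.subset_span (Finset.mem_coe.mpr (Finset.mem_biUnion.mpr ⟨a, ha', hy⟩))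
        exact hle hxa
      · rw [Ideal.span_le]
        intro x hx
        obtain ⟨a, ha, hxa⟩ := hSsub x hx
        rw [hanc]
        exact SetLike.mem_coe.mpr (divV_le_anc ha hxa)
    have hmem : ∀ x : S, ∃ e ≤ j, (x : R k) ∈ Rh k e := by
      rintro ⟨x, hx⟩
      obtain ⟨a, ha, hxa⟩ := hSsub x hx
      exact ⟨j - a, by omega, (mem_divV.mp hxa).1⟩
    choose dd hdd1 hdd2 using hmem
    refine ⟨S.card, fun u => (S.equivFin.symm u : R k), fun u => dd (S.equivFin.symm u),
      fun u => hdd2 _, fun u => hdd1 _, ?_⟩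
    rw [hspanS]
    congr 1
    ext x
    constructor
    · intro hx
      exact ⟨S.equivFin ⟨x, hx⟩, by simp⟩
    · rintro ⟨u, rfl⟩
      exact (S.equivFin.symm u).2
  -- Step 2 : minimal n
  obtain ⟨ν, hPν, hminν⟩ : ∃ n, P n ∧ ∀ m < n, ¬ P m :=
    ⟨Nat.find hex, Nat.find_spec hex, fun m hm => Nat.find_min hex hm⟩
  obtain ⟨f, d, hf, hd, hspan⟩ := hPν
  refine ⟨ν, f, d, hf, hd, hspan, ?_⟩
  -- Step 3 : no syzygy in degree j+1
  by_contra hker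
  obtain ⟨t0, ht0mem, ht0ne⟩ := (Submodule.ne_bot_iff _).mp hker
  set Syz : ℕ → Prop := fun e => ∃ t : Fin ν → R k, (∀ u, t u ∈ Rh k (e - d u)) ∧
    (∀ u, e < d u → t u = 0) ∧ (∑ u, t u * f u = 0) ∧ t ≠ 0 with hSyzdef
  have hSyzJ : Syz (j + 1) := by
    refine ⟨fun u => (t0 u : R k), fun u => (t0 u).2, fun u hu => absurd hu (by
      have := hd u; omega), ?_, ?_⟩
    · have := LinearMap.mem_ker.mp ht0mem
      rwa [mu_apply] at this
    · intro hc
      apply ht0ne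
      funext u
      exact Subtype.ext (congrFun hc u)
  have hexSyz : ∃ e, Syz e := ⟨j + 1, hSyzJ⟩
  obtain ⟨e, heJ, hSyzE, hemin⟩ : ∃ e, e ≤ j + 1 ∧ Syz e ∧ ∀ e' < e, ¬ Syz e' :=
    ⟨Nat.find hexSyz, Nat.find_le hSyzJ, Nat.find_spec hexSyz,
      fun e' he' => Nat.find_min hexSyz he'⟩
  obtain ⟨t, htm, htz, hts, htn⟩ := hSyzE
  by_cases hA : ∃ u, t u ≠ 0 ∧ e ≤ d u
  · -- a generator is redundant, contradicting minimality of ν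
    obtain ⟨u, htu, hdu⟩ := hA
    have hde : d u = e := by
      by_contra hne
      exact htu (htz u (by omega))
    have htu0 : t u ∈ Rh k 0 := by
      have := htm u
      rwa [show e - d u = 0 by omega] at this
    have hνne : ν ≠ 0 := fun h => (h ▸ u).elim0
    obtain ⟨n, rfl⟩ := Nat.exists_eq_succ_of_ne_zero hνne
    obtain ⟨f', d', hf', hd', hspan'⟩ := caseA f d hf hd hspan u t hts htu0 htu
    exact hminν n (Nat.lt_succ_self n) ⟨f', d', hf', hd', hspan'⟩
  · -- all nonzero syzygy coefficients have positive degree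
    push_neg at hA
    have hdlt : ∀ u, t u ≠ 0 → d u < e := fun u hu => hA u hu
    have he1 : 1 ≤ e := by
      obtain ⟨u, hu⟩ := Function.ne_iff.mp htn
      have := hdlt u hu
      omega
    have hsplit : ∀ u, ∃ p' q' : R k, p' ∈ Rh k (e - d u - 1) ∧ q' ∈ Rh k (e - d u - 1) ∧
        t u = X 0 * p' + X 1 * q' ∧ (t u = 0 → p' = 0 ∧ q' = 0) := by
      intro u
      by_cases h0 : t u = 0
      · exact ⟨0, 0, Submodule.zero_mem _, Submodule.zero_mem _, by rw [h0]; ring,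
          fun _ => ⟨rfl, rfl⟩⟩
      · have hdu := hdlt u h0
        have hmem := htm u
        rw [show e - d u = (e - d u - 1) + 1 by omega] at hmem
        obtain ⟨p, q, hp, hq, heq⟩ := split hmem
        exact ⟨p, q, hp, hq, heq, fun hc => absurd hc h0⟩
    choose p q hp hq hpq hz using hsplit
    set P' : R k := ∑ u, p u * f u with hP'
    set Q' : R k := ∑ u, q u * f u with hQ'
    have hfI : ∀ u, f u ∈ I := fun u => hspan ▸ Ideal.subset_span (Set.mem_range_self u)
    have hP'I : P' ∈ I := Ideal.sum_mem _ fun u _ => Ideal.mul_mem_left _ _ (hfI u)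
    have hQ'I : Q' ∈ I := Ideal.sum_mem _ fun u _ => Ideal.mul_mem_left _ _ (hfI u)
    have hP'h : P' ∈ Rh k (e - 1) := by
      refine Submodule.sum_mem _ fun u _ => ?_
      by_cases h0 : t u = 0
      · rw [(hz u h0).1, zero_mul]; exact Submodule.zero_mem _
      · have := (hp u).mul (hf u)
        rwa [show e - d u - 1 + d u = e - 1 by have := hdlt u h0; omega] at this
    have hQ'h : Q' ∈ Rh k (e - 1) := by
      refine Submodule.sum_mem _ fun u _ => ?_
      by_cases h0 : t u = 0
      · rw [(hz u h0).2, zero_mul]; exact Submodule.zero_mem _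
      · have := (hq u).mul (hf u)
        rwa [show e - d u - 1 + d u = e - 1 by have := hdlt u h0; omega] at this
    have hPQ : X 0 * P' + X 1 * Q' = 0 := by
      rw [hP', hQ', Finset.mul_sum, Finset.mul_sum, ← Finset.sum_add_distrib, ← hts]
      refine Finset.sum_congr rfl fun u _ => ?_
      rw [hpq u]
      ring
    obtain ⟨r, hr1, hr2⟩ : ∃ r : R k, Q' = X 0 * r ∧ -P' = X 1 * r :=
      factor_eq (by linear_combination hPQ)
    set g : R k := -r with hgdef
    have hgP : P' = X 1 * g := by rw [hgdef, mul_neg, ← hr2, neg_neg]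
    have hgQ : Q' = -(X 0 * g) := by rw [hgdef, mul_neg, ← hr1, neg_neg]
    have hX0g : X 0 * g ∈ I := by
      rw [← neg_neg ((X 0 : R k) * g), ← hgQ]
      exact Submodule.neg_mem _ hQ'I
    have hX1g : X 1 * g ∈ I := hgP ▸ hP'I
    have hX0gh : X 0 * g ∈ Rh k (e - 1) := by
      have : -Q' = X 0 * g := by rw [hgQ, neg_neg]
      rw [← this]
      exact Submodule.neg_mem _ hQ'h
    have hX1gh : X 1 * g ∈ Rh k (e - 1) := hgP ▸ hP'h
    -- decomposition of g with controlled degrees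
    obtain ⟨r', hr'm, hr'z, hr'e⟩ : ∃ r' : Fin ν → R k,
        (∀ u, X 0 * r' u ∈ Rh k (e - 1 - d u) ∧ X 1 * r' u ∈ Rh k (e - 1 - d u)) ∧
        (∀ u, e - 1 < d u → r' u = 0) ∧ g = ∑ u, r' u * f u := by
      by_cases he2 : 2 ≤ e
      · have hgh : g ∈ Rh k (e - 2) := by
          apply hom_of_X_mul (i := 1)
          rwa [show e - 2 + 1 = e - 1 by omega]
        have hgI : g ∈ I := by
          rw [hanc]
          refine divV_le_anc (a := j + 2 - e) (by omega) (mem_divV.mpr ⟨?_, ?_⟩)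
          · rwa [show j - (j + 2 - e) = e - 2 by omega]
          · intro h hh
            rw [show j + 2 - e = (j + 1 - e) + 1 by omega] at hh
            obtain ⟨h0, h1, hh0, hh1, rfl⟩ := split hh
            have heq : (X 0 * h0 + X 1 * h1) * g = h0 * (X 0 * g) + h1 * (X 1 * g) := by ring
            rw [heq]
            constructor
            · exact Ideal.add_mem _ (Ideal.mul_mem_left _ _ hX0g) (Ideal.mul_mem_left _ _ hX1g)
            · refine Submodule.add_mem _ ?_ ?_
              · have := hh0.mul hX0gh
                rwa [show j + 1 - e + (e - 1) = j by omega] at this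
              · have := hh1.mul hX1gh
                rwa [show j + 1 - e + (e - 1) = j by omega] at this
        obtain ⟨r', hm', hz', he'⟩ := decomp hf (hspan ▸ hgI) hgh
        refine ⟨r', fun u => ?_, fun u hu => hz' u (by omega), he'⟩
        by_cases hdu : d u ≤ e - 2
        · constructor
          · have := (isHomogeneous_X k 0).mul (hm' u)
            rwa [show 1 + (e - 2 - d u) = e - 1 - d u by omega] at this
          · have := (isHomogeneous_X k 1).mul (hm' u)
            rwa [show 1 + (e - 2 - d u) = e - 1 - d u by omega] at this
        · rw [hz' u (by omega)]
          simp only [mul_zero]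
          exact ⟨Submodule.zero_mem _, Submodule.zero_mem _⟩
      · have hg0 : g = 0 := eq_zero_of_X_mul_Rh0 (i := 1) (by
          rw [show (0:ℕ) = e - 1 by omega] at *
          rw [← hgP]
          exact hP'h)
        refine ⟨fun _ => 0, fun u => ?_, fun u _ => rfl, by rw [hg0]; simp⟩
        simp only [mul_zero]
        exact ⟨Submodule.zero_mem _, Submodule.zero_mem _⟩
    -- the two lower-degree syzygies
    have hp'mem : ∀ u, p u - X 1 * r' u ∈ Rh k (e - 1 - d u) := by
      intro u
      refine Submodule.sub_mem _ ?_ (hr'm u).2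
      have := hp u
      rwa [Nat.sub_right_comm] at this
    have hq'mem : ∀ u, q u + X 0 * r' u ∈ Rh k (e - 1 - d u) := by
      intro u
      refine Submodule.add_mem _ ?_ (hr'm u).1
      have := hq u
      rwa [Nat.sub_right_comm] at this
    have htzero : ∀ u, e - 1 < d u → t u = 0 := by
      intro u hu
      by_contra h0
      have := hdlt u h0
      omega
    have hp'z : ∀ u, e - 1 < d u → p u - X 1 * r' u = 0 := by
      intro u hu
      rw [(hz u (htzero u hu)).1, hr'z u (by omega), mul_zero, sub_zero]
    have hq'z : ∀ u, e - 1 < d u → q u + X 0 * r' u = 0 := by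
      intro u hu
      rw [(hz u (htzero u hu)).2, hr'z u (by omega), mul_zero, add_zero]
    have hp'sum : ∑ u, (p u - X 1 * r' u) * f u = 0 := by
      have hexp : ∀ u : Fin ν, (p u - X 1 * r' u) * f u
          = p u * f u - X 1 * (r' u * f u) := by intro u; ring
      rw [Finset.sum_congr rfl fun u _ => hexp u, Finset.sum_sub_distrib, ← Finset.mul_sum,
        ← hr'e, ← hP', hgP]
      ring
    have hq'sum : ∑ u, (q u + X 0 * r' u) * f u = 0 := by
      have hexp : ∀ u : Fin ν, (q u + X 0 * r' u) * f u
          = q u * f u + X 0 * (r' u * f u) := by intro u; ring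
      rw [Finset.sum_congr rfl fun u _ => hexp u, Finset.sum_add_distrib, ← Finset.mul_sum,
        ← hr'e, ← hQ', hgQ]
      ring
    have hp'0 : ∀ u, p u - X 1 * r' u = 0 := by
      by_contra hcon
      push_neg at hcon
      refine hemin (e - 1) (by omega) ⟨fun u => p u - X 1 * r' u, hp'mem, hp'z, hp'sum, ?_⟩
      obtain ⟨u, hu⟩ := hcon
      intro hzero
      exact hu (congrFun hzero u)
    have hq'0 : ∀ u, q u + X 0 * r' u = 0 := by
      by_contra hcon
      push_neg at hcon
      refine hemin (e - 1) (by omega) ⟨fun u => q u + X 0 * r' u, hq'mem, hq'z, hq'sum, ?_⟩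
      obtain ⟨u, hu⟩ := hcon
      intro hzero
      exact hu (congrFun hzero u)
    apply htn
    funext u
    have hpu : p u = X 1 * r' u := by
      have := hp'0 u
      linear_combination this
    have hqu : q u = -(X 0 * r' u) := by
      have := hq'0 u
      linear_combination this
    show t u = 0
    rw [hpq u, hpu, hqu]
    ring

end AncAux

/-- A graded ideal `I ⊆ k[x,y]` is the ancestor ideal of its degree-`j` component
`I_j` if and only if `I` is generated by forms of degrees at most `j` with all
relations of degrees at least `j+2`:  equivalently, `I` has a generating set
`f_1, …, f_ν` of degrees `d_u ≤ j` with `I_{j+1} = ⊕_u R_{j+1−d_u}·f_u`, i.e.,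
`dim I_{j+1} = Σ_u (j+2−d_u)`. -/
theorem isAncestor_iff_gens_le_rels_ge (j : ℕ) (I : Ideal (MvPolynomial (Fin 2) k))
    (hI : ∀ f ∈ I, ∀ n, MvPolynomial.homogeneousComponent n f ∈ I) :
    I = anc j (I.restrictScalars k ⊓ Rh k j) ↔
      ∃ (ν : ℕ) (f : Fin ν → MvPolynomial (Fin 2) k) (d : Fin ν → ℕ),
        (∀ u, f u ∈ Rh k (d u)) ∧ (∀ u, d u ≤ j) ∧
        I = Ideal.span (Set.range f) ∧
        Module.finrank k
            (I.restrictScalars k ⊓ Rh k (j + 1) : Submodule k (MvPolynomial (Fin 2) k)) =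
          ∑ u, (j + 2 - d u) := by
  constructor
  · intro h
    obtain ⟨ν, f, d, hf, hd, hspan, hker⟩ := AncAux.gens_of_anc j I h
    exact ⟨ν, f, d, hf, hd, hspan, (AncAux.rank_iff hf hd hspan).mpr hker⟩
  · rintro ⟨ν, f, d, hf, hd, hspan, hrank⟩
    exact AncAux.anc_of_gens hf hd hspan ((AncAux.rank_iff hf hd hspan).mp hrank)
end

section
/- Let R = k[x,y] and let I ⊆ R be a graded ideal with Hilbert function T = H(R/I) satisfying lim_{i→∞} T_i = c > 0. Then I = f·I′ where f is a homogeneous form of degree c (the GCD of I) and I′ is a graded ideal with R/I′ Artinian of Hilbert function (T:c)_i = T_{i+c} − c. -/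
/-!
Factors of forms are forms: the degree and the trailing degree in `t` of `p(t • x)` are additive.
So the gcd `f` of `I` is a form, say of degree `d`, and multiplication by `f` identifies `(I : f)`
in degree `i` with `I` in degree `i + d`, whence `H(R/(I : f))_i = T_{i+d} - d`. The graded ideal
`J = (I : f)` lies in no principal prime ideal, and such an ideal contains every form of large
degree: if a form `g ∈ J` has a prime factor `p` of degree `b` and `h ∈ J` is a form of degree `e`
prime to `p`, a dimension count gives `p • R_{e+j} + h • R_{b+j} = R_{b+e+j}`, and `R_{e+j} ⊆ (J : p)`
for large `j` by induction on the number of prime factors of `g`, as `g / p ∈ (J : p)`. Finally,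
`T_{i+d} - d = 0` and `T_{i+d} = c` for large `i` give `d = c`.
-/

open MvPolynomial Submodule Finset

variable {k : Type*} [Field k]

noncomputable def HF (I : Ideal (MvPolynomial (Fin 2) k)) (i : ℕ) : ℤ :=
  (Module.finrank k (Rh k i) : ℤ) -
    (Module.finrank k (I.restrictScalars k ⊓ Rh k i : Submodule k (MvPolynomial (Fin 2) k)) : ℤ)

namespace MvPolynomial

variable {σ R : Type*}

section CommSemiring

variable [CommSemiring R]

/-- `p ↦ p(t • x)`, where `t` is the variable of the outer polynomial ring. -/
noncomputable def scaleVars : MvPolynomial σ R →+* Polynomial (MvPolynomial σ R) :=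
  eval₂Hom (Polynomial.C.comp C) fun i => Polynomial.C (X i) * Polynomial.X

theorem coeff_scaleVars (p : MvPolynomial σ R) (j : ℕ) :
    (scaleVars p).coeff j = homogeneousComponent j p := by
  induction p using MvPolynomial.induction_on' with
  | monomial d r =>
    have hd : (monomial d r).IsHomogeneous d.degree := isHomogeneous_monomial r rfl
    have : scaleVars (monomial d r) = Polynomial.C (monomial d r) * Polynomial.X ^ d.degree := by
      simp only [scaleVars, eval₂Hom_monomial, RingHom.coe_comp, Function.comp_apply]
      rw [monomial_eq, Finsupp.prod, Finsupp.prod, Finsupp.degree_apply]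
      simp only [mul_pow, ← Polynomial.C_pow]
      rw [Finset.prod_mul_distrib, ← map_prod, Finset.prod_pow_eq_pow_sum, map_mul]
      ring
    rw [this, Polynomial.coeff_C_mul_X_pow, homogeneousComponent_of_mem hd, eq_comm]
  | add p q hp hq => simp only [map_add, Polynomial.coeff_add, hp, hq]

theorem scaleVars_injective : Function.Injective (scaleVars : MvPolynomial σ R → _) := by
  intro p q h
  ext d
  have := congr_arg (fun P => coeff d (P.coeff d.degree)) h
  simpa [coeff_scaleVars, coeff_homogeneousComponent] using this

theorem IsHomogeneous.scaleVars_eq {p : MvPolynomial σ R} {n : ℕ} (hp : p.IsHomogeneous n) :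
    scaleVars p = Polynomial.C p * Polynomial.X ^ n := by
  ext1 j
  rw [coeff_scaleVars, Polynomial.coeff_C_mul_X_pow, homogeneousComponent_of_mem hp, eq_comm]

theorem IsHomogeneous.homogeneousComponent_mul {f : MvPolynomial σ R} {d : ℕ}
    (hf : f.IsHomogeneous d) (g : MvPolynomial σ R) (n : ℕ) :
    homogeneousComponent (d + n) (f * g) = f * homogeneousComponent n g := by
  rw [← coeff_scaleVars, map_mul, hf.scaleVars_eq, mul_assoc, Polynomial.coeff_C_mul, add_comm,
    Polynomial.coeff_X_pow_mul, coeff_scaleVars]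

theorem isHomogeneous_of_natTrailingDegree_scaleVars_eq {p : MvPolynomial σ R}
    (h : (scaleVars p).natTrailingDegree = (scaleVars p).natDegree) :
    p.IsHomogeneous (scaleVars p).natDegree := by
  intro d hd
  have hc : (scaleVars p).coeff d.degree ≠ 0 := by
    rw [coeff_scaleVars]
    intro h0
    have := congr_arg (coeff d) h0
    rw [coeff_homogeneousComponent, if_pos rfl, coeff_zero] at this
    exact hd this
  have := Polynomial.natTrailingDegree_le_of_ne_zero hc
  have := Polynomial.le_natDegree_of_ne_zero hc
  have hdeg : d.degree = (scaleVars p).natDegree := by omega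
  rwa [Finsupp.degree_eq_weight_one] at hdeg

end CommSemiring

variable [CommRing R] [IsDomain R]

theorem IsHomogeneous.exists_of_mul {p q : MvPolynomial σ R} {m : ℕ} (h : (p * q).IsHomogeneous m)
    (h0 : p * q ≠ 0) : ∃ a b, a + b = m ∧ p.IsHomogeneous a ∧ q.IsHomogeneous b := by
  obtain ⟨hp, hq⟩ := mul_ne_zero_iff.1 h0
  have hp' : scaleVars p ≠ 0 := (map_ne_zero_iff _ scaleVars_injective).2 hp
  have hq' : scaleVars q ≠ 0 := (map_ne_zero_iff _ scaleVars_injective).2 hq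
  have hpq : scaleVars (p * q) = Polynomial.C (p * q) * Polynomial.X ^ m := h.scaleVars_eq
  have hdeg := Polynomial.natDegree_mul hp' hq'
  have htrail := Polynomial.natTrailingDegree_mul hp' hq'
  rw [← map_mul, hpq, Polynomial.natDegree_C_mul_X_pow m _ h0] at hdeg
  rw [← map_mul, hpq, Polynomial.C_mul_X_pow_eq_monomial,
    Polynomial.natTrailingDegree_monomial h0] at htrail
  have := (scaleVars p).natTrailingDegree_le_natDegree
  have := (scaleVars q).natTrailingDegree_le_natDegree
  exact ⟨_, _, hdeg.symm, isHomogeneous_of_natTrailingDegree_scaleVars_eq (by omega),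
    isHomogeneous_of_natTrailingDegree_scaleVars_eq (by omega)⟩

theorem IsHomogeneous.of_mul_left {f g : MvPolynomial σ R} {d m : ℕ} (hf : f.IsHomogeneous d)
    (hf0 : f ≠ 0) (h : (f * g).IsHomogeneous m) : g.IsHomogeneous (m - d) := by
  rcases eq_or_ne g 0 with rfl | hg0
  · exact isHomogeneous_zero _ _ _
  obtain ⟨a, b, rfl, ha, hb⟩ := h.exists_of_mul (mul_ne_zero hf0 hg0)
  obtain rfl := ha.inj_right hf hf0
  rwa [Nat.add_sub_cancel_left]

end MvPolynomial

theorem MvPolynomial.finrank_homogeneousSubmodule {σ K : Type*} [Fintype σ] [Field K] (n : ℕ) :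
    Module.finrank K (homogeneousSubmodule σ K n) = (Fintype.card σ + n - 1).choose n := by
  classical
  have hdeg :
      {d : σ →₀ ℕ | d.degree = n} = ((univ : Finset σ).finsuppAntidiag n : Set (σ →₀ ℕ)) := by
    ext d
    simp [Finsupp.degree_eq_sum]
  rw [(LinearEquiv.ofEq _ _ (homogeneousSubmodule_eq_finsupp_supported σ K n)).finrank_eq,
    hdeg, (AddMonoidAlgebra.supportedEquivFinsupp _).finrank_eq, Module.finrank_finsupp_self]
  simp [card_finsuppAntidiag_nat_eq_choose]

def Ideal.IsGraded {σ R : Type*} [CommSemiring R] (J : Ideal (MvPolynomial σ R)) : Prop :=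
  ∀ f ∈ J, ∀ n, homogeneousComponent n f ∈ J

namespace Ideal.IsGraded

variable {σ R : Type*} [CommRing R] {J : Ideal (MvPolynomial σ R)}

theorem colon (hJ : J.IsGraded) {f : MvPolynomial σ R} {d : ℕ} (hf : f.IsHomogeneous d) :
    (J.colon {f}).IsGraded := by
  intro g hg n
  rw [mem_colon_singleton, smul_eq_mul, mul_comm] at hg ⊢
  rw [← hf.homogeneousComponent_mul]
  exact hJ _ hg _

theorem exists_homogeneousComponent_not_dvd (hJ : J.IsGraded) {h p : MvPolynomial σ R}
    (hh : h ∈ J) (hp : ¬ p ∣ h) :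
    ∃ n, homogeneousComponent n h ∈ J ∧ ¬ p ∣ homogeneousComponent n h := by
  by_contra! hall
  exact hp (sum_homogeneousComponent h ▸ Finset.dvd_sum fun n _ => hall n (hJ h hh n))

theorem exists_isHomogeneous_ne_zero (hJ : J.IsGraded) (hJ0 : J ≠ ⊥) :
    ∃ g ∈ J, g ≠ 0 ∧ ∃ n, g.IsHomogeneous n := by
  obtain ⟨x, hxJ, hx0⟩ := exists_mem_ne_zero_of_ne_bot hJ0
  obtain ⟨n, hnJ, hn0⟩ :=
    hJ.exists_homogeneousComponent_not_dvd hxJ (p := 0) (by rwa [zero_dvd_iff])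
  exact ⟨_, hnJ, by rwa [zero_dvd_iff] at hn0, n, homogeneousComponent_isHomogeneous n x⟩

end Ideal.IsGraded

theorem Ideal.exists_gcd_of_fg {R : Type*} [CommRing R] [IsDomain R] [UniqueFactorizationMonoid R]
    {I : Ideal R} (hI : I.FG) : ∃ f, (∀ x ∈ I, f ∣ x) ∧ ∀ d, (∀ x ∈ I, d ∣ x) → d ∣ f := by
  let _ : StrongNormalizationMonoid R := UniqueFactorizationMonoid.strongNormalizationMonoid
  let _ : NormalizedGCDMonoid R := UniqueFactorizationMonoid.toNormalizedGCDMonoid R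
  obtain ⟨G, rfl⟩ := hI
  refine ⟨G.gcd id, fun x hx => ?_, fun d hd => Finset.dvd_gcd fun g hg => hd g (subset_span hg)⟩
  exact Ideal.mem_span_singleton.1
    ((Ideal.span_le.2 fun g hg => Ideal.mem_span_singleton.2 (Finset.gcd_dvd hg)) hx)

theorem Ideal.coe_eq_image_mul_colon {R : Type*} [CommRing R] {I : Ideal R} {f : R}
    (hf : ∀ x ∈ I, f ∣ x) : (I : Set R) = (fun g => f * g) '' (I.colon {f} : Set R) := by
  ext x
  constructor
  · intro hx
    obtain ⟨q, rfl⟩ := hf x hx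
    exact ⟨q, by rwa [SetLike.mem_coe, mem_colon_singleton, smul_eq_mul, mul_comm], rfl⟩
  · rintro ⟨q, hq, rfl⟩
    rwa [SetLike.mem_coe, mem_colon_singleton, smul_eq_mul, mul_comm] at hq

open scoped Pointwise

theorem finrank_Rh (n : ℕ) : Module.finrank k (Rh k n) = n + 1 := by
  rw [finrank_homogeneousSubmodule, Fintype.card_fin, show 2 + n - 1 = n + 1 by omega,
    Nat.choose_succ_self_right]

instance inst_s11 (n : ℕ) : FiniteDimensional k (Rh k n) :=
  Module.finite_of_finrank_pos (by rw [finrank_Rh]; omega)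

theorem HF_eq_sub_finrank (J : Ideal (MvPolynomial (Fin 2) k)) (i : ℕ) :
    HF J i = i + 1 - Module.finrank k (J.restrictScalars k ⊓ Rh k i : Submodule k _) := by
  rw [HF, finrank_Rh]
  push_cast
  rfl

theorem HF_bot (i : ℕ) : HF (⊥ : Ideal (MvPolynomial (Fin 2) k)) i = i + 1 := by
  rw [HF_eq_sub_finrank, restrictScalars_bot, bot_inf_eq, finrank_bot, Nat.cast_zero, sub_zero]

theorem HF_eq_zero_of_Rh_le {J : Ideal (MvPolynomial (Fin 2) k)} {i : ℕ}
    (h : Rh k i ≤ J.restrictScalars k) : HF J i = 0 := by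
  rw [HF_eq_sub_finrank, inf_eq_right.2 h, finrank_Rh]
  push_cast
  ring

section PointwiseSMul

variable {K A : Type*} [Field K] [CommRing A] [Algebra K A]

theorem Submodule.finrank_pointwise_smul [IsDomain A] {u : A} (hu : u ≠ 0) (S : Submodule K A) :
    Module.finrank K (u • S : Submodule K A) = Module.finrank K S :=
  (equivMapOfInjective (DistribSMul.toLinearMap K A u) (mul_right_injective₀ hu) S).finrank_eq.symm

instance (u : A) (S : Submodule K A) [FiniteDimensional K S] :
    FiniteDimensional K (u • S : Submodule K A) :=
  Module.Finite.map _ _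

theorem Ideal.pointwise_smul_le_restrictScalars_of_le_colon {J : Ideal A} {u : A}
    {S : Submodule K A} (hS : S ≤ (J.colon {u}).restrictScalars K) :
    u • S ≤ J.restrictScalars K := by
  rintro _ ⟨r, hr, rfl⟩
  have hru := mem_colon_singleton.1 (hS hr)
  rwa [smul_eq_mul, mul_comm] at hru

theorem Ideal.pointwise_smul_le_restrictScalars_of_mem {J : Ideal A} {u : A} (hu : u ∈ J)
    (S : Submodule K A) : u • S ≤ J.restrictScalars K := by
  rintro _ ⟨r, -, rfl⟩
  exact J.mul_mem_right r hu

end PointwiseSMul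

theorem smul_Rh_le {u : MvPolynomial (Fin 2) k} {a : ℕ} (hu : u ∈ Rh k a) (i : ℕ) :
    u • Rh k i ≤ Rh k (a + i) := by
  rintro _ ⟨r, hr, rfl⟩
  exact hu.mul hr

theorem smul_Rh_inf_smul_Rh {u v : MvPolynomial (Fin 2) k} {a b : ℕ} (hu : u ∈ Rh k a)
    (hv : v ∈ Rh k b) (hv0 : v ≠ 0) (huv : IsRelPrime u v) (j : ℕ) :
    u • Rh k (b + j) ⊓ v • Rh k (a + j) = (u * v) • Rh k j := by
  apply le_antisymm
  · rintro _ ⟨⟨r, hr, rfl⟩, ⟨t, -, hrt⟩⟩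
    obtain ⟨w, rfl⟩ := huv.symm.dvd_of_dvd_mul_left ⟨t, hrt.symm⟩
    have hw : w ∈ Rh k (b + j - b) := IsHomogeneous.of_mul_left hv hv0 hr
    rw [Nat.add_sub_cancel_left] at hw
    exact ⟨w, hw, mul_assoc u v w⟩
  · rintro _ ⟨w, hw, rfl⟩
    exact ⟨⟨v * w, hv.mul hw, (mul_assoc u v w).symm⟩,
      ⟨u * w, hu.mul hw, (mul_left_comm v u w).trans (mul_assoc u v w).symm⟩⟩

theorem smul_Rh_sup_smul_Rh {u v : MvPolynomial (Fin 2) k} {a b : ℕ} (hu : u ∈ Rh k a)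
    (hu0 : u ≠ 0) (hv : v ∈ Rh k b) (hv0 : v ≠ 0) (huv : IsRelPrime u v) (j : ℕ) :
    u • Rh k (b + j) ⊔ v • Rh k (a + j) = Rh k (a + b + j) := by
  have hle : u • Rh k (b + j) ⊔ v • Rh k (a + j) ≤ Rh k (a + b + j) :=
    sup_le (by simpa only [add_assoc] using smul_Rh_le hu (b + j))
      (by simpa only [add_assoc, add_comm a b] using smul_Rh_le hv (a + j))
  have hdim := finrank_sup_add_finrank_inf_eq (u • Rh k (b + j)) (v • Rh k (a + j))
  rw [smul_Rh_inf_smul_Rh hu hv hv0 huv, finrank_pointwise_smul hu0, finrank_pointwise_smul hv0,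
    finrank_pointwise_smul (mul_ne_zero hu0 hv0), finrank_Rh, finrank_Rh, finrank_Rh] at hdim
  exact eq_of_le_of_finrank_le hle (by rw [finrank_Rh]; omega)

theorem Ideal.IsGraded.eventually_Rh_le {J : Ideal (MvPolynomial (Fin 2) k)} (hJ : J.IsGraded)
    (hJp : ∀ p, Prime p → ∃ h ∈ J, ¬ p ∣ h) {g : MvPolynomial (Fin 2) k} {d : ℕ} (hg0 : g ≠ 0)
    (hgJ : g ∈ J) (hg : g ∈ Rh k d) : ∃ N, ∀ i, N ≤ i → Rh k i ≤ J.restrictScalars k := by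
  induction g using UniqueFactorizationMonoid.induction_on_prime generalizing J d with
  | h₁ => exact absurd rfl hg0
  | h₂ u hu =>
    refine ⟨0, fun i _ => ?_⟩
    rw [J.eq_top_of_isUnit_mem hgJ hu, restrictScalars_top]
    exact le_top
  | h₃ a p ha0 hp ih =>
    obtain ⟨b, e, -, hpb, hae⟩ := IsHomogeneous.exists_of_mul hg hg0
    have hJ₁p : ∀ q, Prime q → ∃ h ∈ J.colon {p}, ¬ q ∣ h := fun q hq => by
      obtain ⟨h, hhJ, hqh⟩ := hJp q hq
      exact ⟨h, mem_colon_singleton.2 (J.mul_mem_right p hhJ), hqh⟩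
    have haJ₁ : a ∈ J.colon {p} := by rwa [mem_colon_singleton, smul_eq_mul, mul_comm]
    obtain ⟨N, hN⟩ := ih (hJ.colon hpb) hJ₁p ha0 haJ₁ hae
    obtain ⟨h, hhJ, hph⟩ := hJp p hp
    obtain ⟨n, hnJ, hpn⟩ := hJ.exists_homogeneousComponent_not_dvd hhJ hph
    have hn0 : homogeneousComponent n h ≠ 0 := fun h0 => hpn (h0 ▸ dvd_zero p)
    have hrel : IsRelPrime p (homogeneousComponent n h) :=
      hp.irreducible.isRelPrime_iff_not_dvd.2 hpn
    refine ⟨N + b + n, fun i hi => ?_⟩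
    obtain ⟨j, rfl⟩ : ∃ j, i = b + n + j := ⟨i - b - n, by omega⟩
    rw [← smul_Rh_sup_smul_Rh hpb hp.ne_zero (homogeneousComponent_mem n h) hn0 hrel j]
    exact sup_le (Ideal.pointwise_smul_le_restrictScalars_of_le_colon (hN _ (by omega)))
      (Ideal.pointwise_smul_le_restrictScalars_of_mem hnJ _)

theorem HF_colon {J : Ideal (MvPolynomial (Fin 2) k)} {f : MvPolynomial (Fin 2) k} {d : ℕ}
    (hf : f ∈ Rh k d) (hf0 : f ≠ 0) (hJf : ∀ x ∈ J, f ∣ x) (i : ℕ) :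
    HF (J.colon {f}) i = HF J (i + d) - d := by
  have hmap : f • ((J.colon {f}).restrictScalars k ⊓ Rh k i) =
      J.restrictScalars k ⊓ Rh k (i + d) := by
    apply le_antisymm
    · rintro _ ⟨r, ⟨hrJ, hr⟩, rfl⟩
      have hrf := mem_colon_singleton.1 hrJ
      rw [smul_eq_mul, mul_comm] at hrf
      exact ⟨hrf, add_comm d i ▸ hf.mul hr⟩
    · rintro w ⟨hwJ, hw⟩
      obtain ⟨r, rfl⟩ := hJf w hwJ
      have hrJ : r ∈ J.colon {f} := by rwa [mem_colon_singleton, smul_eq_mul, mul_comm]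
      have hr : r ∈ Rh k (i + d - d) := IsHomogeneous.of_mul_left hf hf0 hw
      rw [Nat.add_sub_cancel] at hr
      exact ⟨r, ⟨hrJ, hr⟩, rfl⟩
  rw [HF_eq_sub_finrank, HF_eq_sub_finrank, ← hmap, finrank_pointwise_smul hf0]
  push_cast
  ring

theorem Ideal.exists_not_dvd_mem_colon {R : Type*} [CommRing R] [IsDomain R] {I : Ideal R} {f : R}
    (hf0 : f ≠ 0) (hfI : ∀ x ∈ I, f ∣ x) (hgcd : ∀ d, (∀ x ∈ I, d ∣ x) → d ∣ f) {p : R}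
    (hp : ¬ IsUnit p) : ∃ h ∈ I.colon {f}, ¬ p ∣ h := by
  by_contra! hall
  have hfp : f * p ∣ f * 1 := by
    rw [mul_one]
    refine hgcd _ fun x hx => ?_
    obtain ⟨q, rfl⟩ := hfI x hx
    refine mul_dvd_mul_left f (hall q ?_)
    rwa [mem_colon_singleton, smul_eq_mul, mul_comm]
  exact hp (isUnit_of_dvd_one ((mul_dvd_mul_iff_left hf0).1 hfp))

theorem common_factor_of_constant_hilbert_general (I : Ideal (MvPolynomial (Fin 2) k))
    (hI : ∀ f ∈ I, ∀ n, MvPolynomial.homogeneousComponent n f ∈ I)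
    (c s : ℕ) (hs : ∀ i, s ≤ i → HF I i = (c : ℤ)) :
    ∃ f ∈ Rh k c, ∃ I' : Ideal (MvPolynomial (Fin 2) k),
      (∀ g ∈ I', ∀ n, MvPolynomial.homogeneousComponent n g ∈ I') ∧
      (I : Set (MvPolynomial (Fin 2) k)) = (fun g => f * g) '' (I' : Set (MvPolynomial (Fin 2) k)) ∧
      (∀ i : ℕ, HF I' i = HF I (i + c) - c) ∧
      (∃ n : ℕ, ∀ i, n ≤ i → HF I' i = 0) := by
  have hI0 : I ≠ ⊥ := by
    rintro rfl
    have := hs (s + c) (by omega)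
    rw [HF_bot] at this
    omega
  obtain ⟨f, hfI, hgcd⟩ := Ideal.exists_gcd_of_fg (IsNoetherian.noetherian I)
  obtain ⟨x, hxI, hx0, n, hx⟩ := Ideal.IsGraded.exists_isHomogeneous_ne_zero hI hI0
  obtain ⟨q, rfl⟩ := hfI x hxI
  obtain ⟨d, e, -, hf, hq⟩ := hx.exists_of_mul hx0
  have hf0 : f ≠ 0 := left_ne_zero_of_mul hx0
  have hqI' : q ∈ I.colon {f} := by rwa [mem_colon_singleton, smul_eq_mul, mul_comm]
  obtain ⟨N, hN⟩ := Ideal.IsGraded.eventually_Rh_le (Ideal.IsGraded.colon hI hf)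
    (fun p hp => I.exists_not_dvd_mem_colon hf0 hfI hgcd hp.not_isUnit) (right_ne_zero_of_mul hx0)
    hqI' hq
  have hHF := HF_colon hf hf0 hfI
  obtain rfl : d = c := by
    have := hHF (N + s)
    rw [HF_eq_zero_of_Rh_le (hN _ (by omega)), hs _ (by omega)] at this
    omega
  exact ⟨f, hf, I.colon {f}, Ideal.IsGraded.colon hI hf, Ideal.coe_eq_image_mul_colon hfI, hHF,
    N, fun i hi => HF_eq_zero_of_Rh_le (hN i hi)⟩

/-- A graded ideal `I ⊆ k[x,y]` whose Hilbert function `T = H(R/I)` is eventually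
the constant `c > 0` factors as `I = f·I′` with `f` a form of degree `c` (the GCD
of `I`) and `I′` graded with `R/I′` Artinian of Hilbert function
`(T:c)_i = T_{i+c} − c`. -/
theorem common_factor_of_constant_hilbert (I : Ideal (MvPolynomial (Fin 2) k))
    (hI : ∀ f ∈ I, ∀ n, MvPolynomial.homogeneousComponent n f ∈ I)
    (c s : ℕ) (hc : 0 < c) (hs : ∀ i, s ≤ i → HF I i = (c : ℤ)) :
    ∃ f ∈ Rh k c, ∃ I' : Ideal (MvPolynomial (Fin 2) k),
      (∀ g ∈ I', ∀ n, MvPolynomial.homogeneousComponent n g ∈ I') ∧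
      (I : Set (MvPolynomial (Fin 2) k)) = (fun g => f * g) '' (I' : Set (MvPolynomial (Fin 2) k)) ∧
      (∀ i : ℕ, HF I' i = HF I (i + c) - c) ∧
      (∃ n : ℕ, ∀ i, n ≤ i → HF I' i = 0) :=
  common_factor_of_constant_hilbert_general I hI c s hs
end
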